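/- arXiv:2308.15635 — 4 statements merged into one kernel-verified Lean document; each statement's English description precedes it below -/
import Mathlib

section
/- Let L be a list of Booleans that is cyclically bimodal (such a list records, in cyclic order, the in/out directions of the edges around a bimodal vertex of a plane digraph). Then every cyclic arc of L, i.e. every list of the form (L.rotate n).take m, has at least one configuration in C; equivalently, the destutter of every such arc is a sublist of [o,i,o] or of [i,o,i]. -/
/-- Edge directions at a vertex: `true` = incoming (`i`), `false` = outgoing (`o`).
The configuration set `C = {[i], [o], [i,o], [o,i], [o,i,o], [i,o,i]}`. -/
def Config : Set (List Bool) :=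
  {[true], [false], [true, false], [false, true],
    [false, true, false], [true, false, true]}

/-- A list, viewed as a cyclic sequence, is cyclically bimodal if the destutter of
some rotation has length at most `2`. -/
def CyclicallyBimodal (L : List Bool) : Prop :=
  ∃ n : ℕ, (List.destutter (· ≠ ·) (L.rotate n)).length ≤ 2

/-! The length of `destutter (· ≠ ·)` counts the runs of a list. It cannot grow when passing to a
sublist, and rotating a list changes it by at most one, because only the run that is cut at the
seam can split. So every rotation of a cyclically bimodal list has at most three runs, hence so
has every arc, and an alternating Boolean list of length at most three is a sublist of `[o,i,o]`
or `[i,o,i]`. -/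

namespace List

variable {α : Type*} [DecidableEq α]

theorem length_destutter_ne_le_of_sublist {l₁ l₂ : List α} (h : l₁ <+ l₂) :
    (l₁.destutter (· ≠ ·)).length ≤ (l₂.destutter (· ≠ ·)).length :=
  (isChain_destutter _ l₁).length_le_length_destutter_ne ((destutter_sublist _ l₁).trans h)

theorem length_destutter_ne_append_le (l₁ l₂ : List α) :
    ((l₁ ++ l₂).destutter (· ≠ ·)).length ≤
      (l₁.destutter (· ≠ ·)).length + (l₂.destutter (· ≠ ·)).length := by
  obtain ⟨c₁, c₂, hc, hc₁, hc₂⟩ := sublist_append_iff.mp (destutter_sublist (· ≠ ·) (l₁ ++ l₂))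
  have hchain := isChain_destutter (· ≠ ·) (l₁ ++ l₂)
  rw [hc] at hchain ⊢
  rw [length_append]
  exact Nat.add_le_add (hchain.left_of_append.length_le_length_destutter_ne hc₁)
    (hchain.right_of_append.length_le_length_destutter_ne hc₂)

theorem length_destutter'_ne_add_le (a : α) (l₁ l₂ : List α) :
    (l₁.destutter' (· ≠ ·) a).length + (l₂.destutter (· ≠ ·)).length ≤
      ((l₁ ++ l₂).destutter' (· ≠ ·) a).length + 1 := by
  induction l₁ generalizing a with
  | nil =>
    cases l₂ with
    | nil => simp
    | cons b l₂ =>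
      have := le_length_destutter'_cons (R := (· ≠ ·)) (a := a) (b := b) (l := l₂)
      simp only [destutter'_nil, length_singleton, nil_append, destutter_cons']
      omega
  | cons b l₁ ih =>
    rw [cons_append, destutter'_cons, destutter'_cons]
    split_ifs
    · have := ih b
      simp only [length_cons]
      omega
    · exact ih a

theorem length_destutter_ne_add_le (l₁ l₂ : List α) :
    (l₁.destutter (· ≠ ·)).length + (l₂.destutter (· ≠ ·)).length ≤
      ((l₁ ++ l₂).destutter (· ≠ ·)).length + 1 := by
  cases l₁ with
  | nil => simp
  | cons a l₁ => simpa [destutter_cons'] using length_destutter'_ne_add_le a l₁ l₂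

theorem IsRotated.length_destutter_ne_le {l l' : List α} (h : l ~r l') :
    (l'.destutter (· ≠ ·)).length ≤ (l.destutter (· ≠ ·)).length + 1 := by
  obtain ⟨n, rfl⟩ := h
  set k := n % l.length
  calc ((l.rotate n).destutter (· ≠ ·)).length
      = ((l.drop k ++ l.take k).destutter (· ≠ ·)).length := by rw [rotate_eq_drop_append_take_mod]
    _ ≤ ((l.drop k).destutter (· ≠ ·)).length + ((l.take k).destutter (· ≠ ·)).length :=
      length_destutter_ne_append_le _ _
    _ ≤ ((l.take k ++ l.drop k).destutter (· ≠ ·)).length + 1 := by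
      rw [Nat.add_comm]; exact length_destutter_ne_add_le _ _
    _ = (l.destutter (· ≠ ·)).length + 1 := by rw [take_append_drop]

end List

theorem Bool.sublist_or_sublist_of_isChain_ne {l : List Bool} (hl : l.IsChain (· ≠ ·))
    (hlen : l.length ≤ 3) :
    l.Sublist [false, true, false] ∨ l.Sublist [true, false, true] := by
  rcases l with _ | ⟨a, _ | ⟨b, _ | ⟨c, _ | ⟨d, l⟩⟩⟩⟩
  · simp
  · cases a <;> decide
  · revert hl; cases a <;> cases b <;> decide
  · revert hl; cases a <;> cases b <;> cases c <;> decide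
  · simp at hlen; omega

theorem CyclicallyBimodal.length_destutter_rotate_le {L : List Bool} (hL : CyclicallyBimodal L)
    (n : ℕ) : ((L.rotate n).destutter (· ≠ ·)).length ≤ 3 := by
  obtain ⟨k, hk⟩ := hL
  have hrot : L.rotate k ~r L.rotate n :=
    (List.IsRotated.forall L k).trans (List.IsRotated.forall L n).symm
  have := hrot.length_destutter_ne_le
  omega

/-- If `L` is cyclically bimodal then every cyclic arc `(L.rotate n).take m` has at
least one configuration in `C`; equivalently, its destutter is a sublist of
`[o,i,o]` or of `[i,o,i]`. -/
theorem cyclic_arc_has_configuration (L : List Bool) (hL : CyclicallyBimodal L)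
    (n m : ℕ) :
    (∃ X ∈ Config, (List.destutter (· ≠ ·) ((L.rotate n).take m)).Sublist X) ∧
      ((List.destutter (· ≠ ·) ((L.rotate n).take m)).Sublist [false, true, false] ∨
        (List.destutter (· ≠ ·) ((L.rotate n).take m)).Sublist [true, false, true]) := by
  have hlen : (((L.rotate n).take m).destutter (· ≠ ·)).length ≤ 3 :=
    (List.length_destutter_ne_le_of_sublist (List.take_sublist m _)).trans
      (hL.length_destutter_rotate_le n)
  have hsub := Bool.sublist_or_sublist_of_isChain_ne (List.isChain_destutter _ _) hlen
  refine ⟨?_, hsub⟩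
  rcases hsub with h | h
  · exact ⟨_, by simp [Config], h⟩
  · exact ⟨_, by simp [Config], h⟩
end

section
/- Let X, X', X* ∈ C with X and X' compatible with respect to X*. If a list L₁ of Booleans has configuration X and a list L₂ of Booleans has configuration X', then the concatenation L₁ ++ L₂ has configuration X*. (This is the paper's composition rule for configurations when a noose is composed of two smaller nooses meeting at a common vertex.) -/
/-- A list `L` has configuration `X ∈ C` if the destutter of `L` is a sublist of `X`. -/
def HasConfig (L X : List Bool) : Prop :=
  X ∈ Config ∧ (List.destutter (· ≠ ·) L).Sublist X

/-- `X` and `X'` are compatible with respect to `X*` if the destutter of `X ++ X'`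
(concatenated in this order) is a contiguous substring (infix) of `X*`. -/
def CompatibleWrt (X X' Xstar : List Bool) : Prop :=
  (List.destutter (· ≠ ·) (X ++ X')) <:+: Xstar

/-! ### Auxiliary development: a concrete destutter function on `List Bool` -/

/-- A concrete implementation of `List.destutter (· ≠ ·)` on `List Bool`. -/
def dd : List Bool → List Bool
  | [] => []
  | [a] => [a]
  | a :: b :: t => if a = b then dd (b :: t) else a :: dd (b :: t)

theorem dd_eq : ∀ l : List Bool, l.destutter (· ≠ ·) = dd l := by
  intro l
  induction l using dd.induct with
  | case1 => rfl
  | case2 a => rfl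
  | case3 b t ih =>
    rw [List.destutter_cons_cons, if_neg (by simp), dd, if_pos rfl, ← ih, List.destutter_cons']
  | case4 a b t h ih =>
    rw [List.destutter_cons_cons, if_pos (by simp [h]), dd, if_neg h, ← ih, List.destutter_cons']

theorem dd_head : ∀ (a : Bool) (l : List Bool), ∃ u, dd (a :: l) = a :: u := by
  intro a l
  induction l generalizing a with
  | nil => exact ⟨[], rfl⟩
  | cons b t ih =>
    by_cases h : a = b
    · subst h; obtain ⟨u, hu⟩ := ih a; exact ⟨u, by rw [dd, if_pos rfl, hu]⟩
    · exact ⟨dd (b :: t), by rw [dd, if_neg h]⟩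

theorem dd_idem : ∀ l : List Bool, dd (dd l) = dd l := by
  intro l
  induction l using dd.induct with
  | case1 => rfl
  | case2 a => rfl
  | case3 b t ih => rw [dd, if_pos rfl, ih]
  | case4 a b t h ih =>
    obtain ⟨u, hu⟩ := dd_head b t
    rw [dd, if_neg h, hu, dd, if_neg h, ← hu, ih, hu]

theorem dd_cons_dd : ∀ (m : List Bool) (a : Bool), dd (a :: dd m) = dd (a :: m) := by
  intro m
  induction m using dd.induct with
  | case1 => intro a; rfl
  | case2 b => intro a; rfl
  | case3 b t ih =>
    intro a
    have e : dd (b :: b :: t) = dd (b :: t) := by rw [dd]; simp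
    rw [e, ih a]
    by_cases hab : a = b <;> simp [dd, hab, e]
  | case4 c b t h ih =>
    intro a
    obtain ⟨u, hu⟩ := dd_head b t
    have e : dd (c :: b :: t) = c :: dd (b :: t) := by rw [dd, if_neg h]
    have e2 : dd (b :: u) = dd (b :: t) := by rw [← hu]; exact dd_idem _
    rw [e, hu]
    by_cases hac : a = c <;> simp [dd, hac, h, e2, hu]

theorem dd_append_left : ∀ (l m : List Bool), dd (dd l ++ m) = dd (l ++ m) := by
  intro l
  induction l using dd.induct with
  | case1 => intro m; rfl
  | case2 a => intro m; rfl
  | case3 b t ih =>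
    intro m
    have e : dd (b :: b :: t) = dd (b :: t) := by rw [dd]; simp
    rw [e, ih m]
    show _ = dd (b :: b :: (t ++ m))
    rw [dd]; simp
  | case4 a b t h ih =>
    intro m
    obtain ⟨u, hu⟩ := dd_head b t
    have e : dd (a :: b :: t) = a :: dd (b :: t) := by rw [dd, if_neg h]
    rw [e, hu]
    show dd (a :: b :: (u ++ m)) = dd (a :: b :: (t ++ m))
    rw [dd, if_neg h, dd, if_neg h]
    have := ih m
    rw [hu] at this
    simp only [List.cons_append] at this
    rw [this]

theorem dd_append_right : ∀ (l m : List Bool), dd (l ++ dd m) = dd (l ++ m) := by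
  intro l m
  induction l with
  | nil => exact dd_idem m
  | cons a t ih =>
    show dd (a :: (t ++ dd m)) = dd (a :: (t ++ m))
    rw [← dd_cons_dd (t ++ dd m), ih, dd_cons_dd]

theorem dd_append_append (l m : List Bool) : dd (dd l ++ dd m) = dd (l ++ m) := by
  rw [dd_append_left, dd_append_right]

/-- The configuration set as a concrete list. -/
def CL : List (List Bool) :=
  [[true], [false], [true, false], [false, true],
    [false, true, false], [true, false, true]]

theorem mem_config {X : List Bool} : X ∈ Config ↔ X ∈ CL := by
  simp [Config, CL]

theorem key : ∀ X ∈ CL, ∀ X' ∈ CL, ∀ Xs ∈ CL, List.IsInfix (dd (X ++ X')) Xs →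
    ∀ d₁ ∈ X.sublists, ∀ d₂ ∈ X'.sublists, List.Sublist (dd (d₁ ++ d₂)) Xs := by decide

/-- Composition rule: if `X, X', X* ∈ C`, `X` and `X'` are compatible with respect
to `X*`, `L₁` has configuration `X` and `L₂` has configuration `X'`, then
`L₁ ++ L₂` has configuration `X*`. -/
theorem concat_has_configuration (X X' Xstar : List Bool)
    (hX : X ∈ Config) (hX' : X' ∈ Config) (hXstar : Xstar ∈ Config)
    (hc : CompatibleWrt X X' Xstar) (L₁ L₂ : List Bool)
    (h₁ : HasConfig L₁ X) (h₂ : HasConfig L₂ X') :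
    HasConfig (L₁ ++ L₂) Xstar := by
  obtain ⟨-, s₁⟩ := h₁
  obtain ⟨-, s₂⟩ := h₂
  rw [dd_eq] at s₁ s₂
  unfold CompatibleWrt at hc
  rw [dd_eq] at hc
  refine ⟨hXstar, ?_⟩
  rw [dd_eq, ← dd_append_append]
  exact key X (mem_config.mp hX) X' (mem_config.mp hX') Xstar (mem_config.mp hXstar) hc
    (dd L₁) (List.mem_sublists.mpr s₁) (dd L₂) (List.mem_sublists.mpr s₂)
end

section
/- (Soundness of Reduction Rule 2.) Let G be an embedded digraph with nonnegative rational edge weights w, and let e₀ ∈ E be an edge both of whose endpoints tail e₀ and head e₀ are bimodal in G. Let G' = G[E ∖ {e₀}] be the embedded digraph obtained by deleting e₀, each vertex keeping the induced cyclic ordering. Then MBW(G, w) = MBW(G', w) + w(e₀); equivalently, G has a bimodal spanning subgraph of weight at least W if and only if G' has one of weight at least W − w(e₀). -/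
/-!
Deleting `e₀` from a bimodal edge set of `G` leaves it bimodal in `G'`, since the rotation of
`G'` at each vertex is a rotation of the induced one and two-block lists are closed under
sublists. Conversely, adding `e₀` to a bimodal edge set of `G'` only changes the dart lists at
`tail e₀` and `head e₀`, and these stay bimodal because a good vertex is bimodal in every
spanning subgraph. So `F ↦ F \ {e₀}` and `F' ↦ insert e₀ F'` move bimodal subgraphs between
`G` and `G'`, changing the weight by at most `w e₀` and by exactly `w e₀` respectively.
-/

open scoped Classical

/-- An embedded digraph: a finite edge set `edges` within an ambient type `E`,
maps `tail, head : E → V` with `tail e ≠ head e` for edges, and for each vertex a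
cyclic ordering `rot v` (a list, considered up to rotation) containing exactly once
each dart at `v`.  A dart is a pair `(e, b)` where `b = true` marks the in-dart
(with `head e = v`) and `b = false` the out-dart (with `tail e = v`). -/
structure EmbDigraph (V : Type*) (E : Type*) where
  edges : Finset E
  tail : E → V
  head : E → V
  tail_ne_head : ∀ e ∈ edges, tail e ≠ head e
  rot : V → List (E × Bool)
  rot_nodup : ∀ u : V, (rot u).Nodup
  mem_rot : ∀ (u : V) (d : E × Bool),
    d ∈ rot u ↔ d.1 ∈ edges ∧ ((d.2 = true ∧ head d.1 = u) ∨ (d.2 = false ∧ tail d.1 = u))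

namespace EmbDigraph

variable {V : Type*} {E : Type*}

/-- A list of booleans consisting of a block of `true`s followed by a block of
`false`s: all in-darts precede all out-darts. -/
def IsTwoBlock (l : List Bool) : Prop :=
  ∃ a b : ℕ, l = List.replicate a true ++ List.replicate b false

/-- Vertex `u` is bimodal in the spanning subgraph `G[F]`: some rotation of its
dart list, restricted to the darts of edges in `F`, has all in-darts preceding all
out-darts. -/
def VertexBimodalIn (G : EmbDigraph V E) (F : Finset E) (u : V) : Prop :=
  ∃ n : ℕ,
    IsTwoBlock ((((G.rot u).rotate n).filter fun d => decide (d.1 ∈ F)).map Prod.snd)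

/-- The spanning subgraph `G[F]` is bimodal: every vertex is bimodal in it. -/
def BimodalIn (G : EmbDigraph V E) (F : Finset E) : Prop :=
  ∀ u : V, G.VertexBimodalIn F u

/-- A vertex is good if it is bimodal in `G` itself; otherwise it is bad. -/
def Good (G : EmbDigraph V E) (u : V) : Prop :=
  G.VertexBimodalIn G.edges u

/-- `m` is the maximum weight `MBW(G, w)` of a bimodal spanning subgraph of `G`. -/
def IsMBW (G : EmbDigraph V E) (w : E → ℚ) (m : ℚ) : Prop :=
  IsGreatest {x : ℚ | ∃ F : Finset E, F ⊆ G.edges ∧ G.BimodalIn F ∧ ∑ e ∈ F, w e = x} m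

end EmbDigraph

open EmbDigraph

theorem List.IsRotated.filter {α : Type*} {l l' : List α} (h : l ~r l') (p : α → Bool) :
    l.filter p ~r l'.filter p := by
  obtain ⟨n, hn, rfl⟩ := List.isRotated_iff_mod.1 h
  rw [List.rotate_eq_drop_append_take hn, List.filter_append]
  conv_lhs => rw [← List.take_append_drop n l, List.filter_append]
  exact List.isRotated_append

theorem List.filter_sublist_filter_of_imp {α : Type*} {l : List α} {p q : α → Bool}
    (h : ∀ a ∈ l, p a → q a) : (l.filter p).Sublist (l.filter q) := by
  have : l.filter p = (l.filter q).filter p := by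
    rw [List.filter_filter]
    exact List.filter_congr fun a ha => by cases hp : p a <;> simp [hp, h a ha]
  rw [this]
  exact List.filter_sublist

theorem Finset.sum_le_sum_erase_add {ι M : Type*} [AddCommMonoid M] [PartialOrder M]
    [IsOrderedAddMonoid M] [DecidableEq ι] {f : ι → M} (hf : ∀ i, 0 ≤ f i) (s : Finset ι)
    (a : ι) : ∑ i ∈ s, f i ≤ ∑ i ∈ s.erase a, f i + f a :=
  calc ∑ i ∈ s, f i ≤ ∑ i ∈ insert a (s.erase a), f i :=
        Finset.sum_le_sum_of_subset_of_nonneg (Finset.insert_erase_subset a s) fun i _ _ => hf i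
    _ = ∑ i ∈ s.erase a, f i + f a := by rw [Finset.sum_insert (Finset.notMem_erase a s), add_comm]

namespace EmbDigraph

variable {V : Type*} {E : Type*}

theorem IsTwoBlock.of_sublist {l l' : List Bool} (hl : IsTwoBlock l) (h : l'.Sublist l) :
    IsTwoBlock l' := by
  obtain ⟨a, b, rfl⟩ := hl
  obtain ⟨l₁, l₂, rfl, h₁, h₂⟩ := List.sublist_append_iff.1 h
  obtain ⟨a', -, rfl⟩ := List.sublist_replicate_iff.1 h₁
  obtain ⟨b', -, rfl⟩ := List.sublist_replicate_iff.1 h₂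
  exact ⟨a', b', rfl⟩

/-- `G.VertexBimodalIn F u` unfolds to `IsBimodalOn (G.rot u) F`. -/
def IsBimodalOn (l : List (E × Bool)) (F : Finset E) : Prop :=
  ∃ n : ℕ, IsTwoBlock ((((l.rotate n).filter fun d => decide (d.1 ∈ F))).map Prod.snd)

namespace IsBimodalOn

variable {l l' : List (E × Bool)} {F F' : Finset E}

theorem of_isRotated (h : IsBimodalOn l F) (hl : l ~r l') : IsBimodalOn l' F := by
  obtain ⟨n, hn⟩ := h
  obtain ⟨m, hm⟩ := hl.symm.trans (List.IsRotated.forall l n).symm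
  exact ⟨m, hm ▸ hn⟩

theorem mono (h : IsBimodalOn l F) (hF : ∀ d ∈ l, d.1 ∈ F' → d.1 ∈ F) : IsBimodalOn l F' := by
  obtain ⟨n, hn⟩ := h
  refine ⟨n, hn.of_sublist ((List.filter_sublist_filter_of_imp fun d hd => ?_).map _)⟩
  simpa using hF d (List.mem_rotate.1 hd)

theorem filter (h : IsBimodalOn l F) (q : E × Bool → Bool) (hq : ∀ d ∈ l, d.1 ∈ F → q d) :
    IsBimodalOn (l.filter q) F := by
  obtain ⟨n, hn⟩ := h
  obtain ⟨m, hm⟩ := ((List.IsRotated.forall l n).filter q).symm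
  refine ⟨m, ?_⟩
  rwa [hm, List.filter_filter, List.filter_congr fun d hd => ?_]
  have := hq d (List.mem_rotate.1 hd)
  cases hF : decide (d.1 ∈ F) <;> simp_all

end IsBimodalOn

variable {G G' : EmbDigraph V E} {e₀ : E}

theorem Good.vertexBimodalIn {u : V} (h : G.Good u) (F : Finset E) : G.VertexBimodalIn F u :=
  IsBimodalOn.mono h fun d hd _ => ((G.mem_rot u d).1 hd).1

theorem fst_ne_of_mem_rot {u : V} (h₁ : u ≠ G.tail e₀) (h₂ : u ≠ G.head e₀) {d : E × Bool}
    (hd : d ∈ G.rot u) : d.1 ≠ e₀ := by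
  rintro rfl
  rcases ((G.mem_rot u d).1 hd).2 with ⟨-, h⟩ | ⟨-, h⟩
  exacts [h₂ h.symm, h₁ h.symm]

theorem bimodalIn_erase
    (hrot : ∀ u : V, ∃ n : ℕ,
      G'.rot u = ((G.rot u).filter fun d => decide (d.1 ≠ e₀)).rotate n)
    {F : Finset E} (hB : G.BimodalIn F) : G'.BimodalIn (F.erase e₀) := by
  intro u
  obtain ⟨n, hn⟩ := hrot u
  have hB' : IsBimodalOn ((G.rot u).filter fun d => decide (d.1 ≠ e₀)) (F.erase e₀) :=
    (IsBimodalOn.mono (hB u) fun _ _ hd => Finset.mem_of_mem_erase hd).filter _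
      fun _ _ hd => decide_eq_true (Finset.ne_of_mem_erase hd)
  exact hB'.of_isRotated (hn ▸ (List.IsRotated.forall _ n).symm)

theorem bimodalIn_insert
    (hrot : ∀ u : V, ∃ n : ℕ,
      G'.rot u = ((G.rot u).filter fun d => decide (d.1 ≠ e₀)).rotate n)
    (htail : G.Good (G.tail e₀)) (hhead : G.Good (G.head e₀))
    {F : Finset E} (hB : G'.BimodalIn F) : G.BimodalIn (insert e₀ F) := by
  intro u
  by_cases h₁ : u = G.tail e₀
  · exact h₁ ▸ htail.vertexBimodalIn _
  by_cases h₂ : u = G.head e₀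
  · exact h₂ ▸ hhead.vertexBimodalIn _
  have hne : ∀ d ∈ G.rot u, d.1 ≠ e₀ := fun d => fst_ne_of_mem_rot h₁ h₂
  obtain ⟨n, hn⟩ := hrot u
  have hrot_u : G'.rot u ~r G.rot u := by
    rw [hn, List.filter_eq_self.2 fun d hd => decide_eq_true (hne d hd)]
    exact List.IsRotated.forall _ n
  exact (IsBimodalOn.of_isRotated (hB u) hrot_u).mono fun d hd hF =>
    (Finset.mem_insert.1 hF).resolve_left (hne d hd)

end EmbDigraph

theorem reduction_rule_delete_good_edge_general {V E : Type*}
    (G G' : EmbDigraph V E) (w : E → ℚ) (hw : ∀ e, 0 ≤ w e)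
    (e₀ : E) (he₀ : e₀ ∈ G.edges)
    (htail : G.Good (G.tail e₀)) (hhead : G.Good (G.head e₀))
    (hE : G'.edges = G.edges.erase e₀)
    (hrot : ∀ u : V, ∃ n : ℕ,
      G'.rot u = ((G.rot u).filter fun d => decide (d.1 ≠ e₀)).rotate n) :
    (∀ m m' : ℚ, G.IsMBW w m → G'.IsMBW w m' → m = m' + w e₀) ∧
      (∀ W : ℚ,
        (∃ F : Finset E, F ⊆ G.edges ∧ G.BimodalIn F ∧ W ≤ ∑ e ∈ F, w e) ↔
          (∃ F : Finset E, F ⊆ G'.edges ∧ G'.BimodalIn F ∧ W - w e₀ ≤ ∑ e ∈ F, w e)) := by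
  have erase_spec : ∀ F ⊆ G.edges, G.BimodalIn F → F.erase e₀ ⊆ G'.edges ∧
      G'.BimodalIn (F.erase e₀) ∧ ∑ e ∈ F, w e ≤ ∑ e ∈ F.erase e₀, w e + w e₀ :=
    fun F hF hB => ⟨hE ▸ Finset.erase_subset_erase e₀ hF, bimodalIn_erase hrot hB,
      Finset.sum_le_sum_erase_add hw F e₀⟩
  have insert_spec : ∀ F ⊆ G'.edges, G'.BimodalIn F → insert e₀ F ⊆ G.edges ∧
      G.BimodalIn (insert e₀ F) ∧ ∑ e ∈ insert e₀ F, w e = ∑ e ∈ F, w e + w e₀ := by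
    intro F hF hB
    have he₀F : e₀ ∉ F := fun h => by simpa [hE] using hF h
    refine ⟨Finset.insert_subset he₀ (hF.trans (hE ▸ Finset.erase_subset e₀ G.edges)),
      bimodalIn_insert hrot htail hhead hB, ?_⟩
    rw [Finset.sum_insert he₀F, add_comm]
  refine ⟨fun m m' hm hm' => ?_, fun W => ⟨?_, ?_⟩⟩
  · obtain ⟨F, hF, hB, rfl⟩ := hm.1
    obtain ⟨F', hF', hB', rfl⟩ := hm'.1
    obtain ⟨hsub, hbim, hle⟩ := erase_spec F hF hB
    obtain ⟨hsub', hbim', heq⟩ := insert_spec F' hF' hB'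
    have h₁ := hm'.2 ⟨_, hsub, hbim, rfl⟩
    have h₂ := hm.2 ⟨_, hsub', hbim', rfl⟩
    linarith
  · rintro ⟨F, hF, hB, hW⟩
    obtain ⟨hsub, hbim, hle⟩ := erase_spec F hF hB
    exact ⟨_, hsub, hbim, by linarith⟩
  · rintro ⟨F, hF, hB, hW⟩
    obtain ⟨hsub, hbim, heq⟩ := insert_spec F hF hB
    exact ⟨_, hsub, hbim, by linarith⟩

/-- Soundness of Reduction Rule 2: if both endpoints of `e₀` are bimodal in `G`,
and `G'` is obtained from `G` by deleting `e₀` (each vertex keeping the induced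
cyclic ordering), then `MBW(G, w) = MBW(G', w) + w e₀`; equivalently, `G` has a
bimodal spanning subgraph of weight `≥ W` iff `G'` has one of weight `≥ W - w e₀`. -/
theorem reduction_rule_delete_good_edge {V E : Type*}
    (G G' : EmbDigraph V E) (w : E → ℚ) (hw : ∀ e, 0 ≤ w e)
    (e₀ : E) (he₀ : e₀ ∈ G.edges)
    (htail : G.Good (G.tail e₀)) (hhead : G.Good (G.head e₀))
    (hE : G'.edges = G.edges.erase e₀)
    (ht : G'.tail = G.tail) (hh : G'.head = G.head)
    (hrot : ∀ u : V, ∃ n : ℕ,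
      G'.rot u = ((G.rot u).filter fun d => decide (d.1 ≠ e₀)).rotate n) :
    (∀ m m' : ℚ, G.IsMBW w m → G'.IsMBW w m' → m = m' + w e₀) ∧
      (∀ W : ℚ,
        (∃ F : Finset E, F ⊆ G.edges ∧ G.BimodalIn F ∧ W ≤ ∑ e ∈ F, w e) ↔
          (∃ F : Finset E, F ⊆ G'.edges ∧ G'.BimodalIn F ∧ W - w e₀ ≤ ∑ e ∈ F, w e)) :=
  reduction_rule_delete_good_edge_general G G' w hw e₀ he₀ htail hhead hE hrot
end

section
/- (Soundness of Reduction Rule 3: pendant splitting at a bimodal vertex.) Let G be an embedded digraph with nonnegative rational edge weights w, and let v be a bimodal vertex of G. Let G' be obtained from G as follows: for every edge e incident to v, introduce a fresh vertex x_e and redirect the v-endpoint of e to x_e, so that e now joins its other endpoint u to x_e, keeping its direction; the cyclic ordering at u is unchanged (its dart of e is kept in place), the cyclic ordering at x_e consists of the single dart of e, and v becomes isolated; edge weights are unchanged. Then MBW(G', w) = MBW(G, w). -/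
open scoped Classical

open EmbDigraph


open EmbDigraph in
private lemma twoBlock_of_const {l : List Bool} (b : Bool) (h : ∀ x ∈ l, x = b) :
    IsTwoBlock l := by
  have hl : l = List.replicate l.length b := List.eq_replicate_of_mem h
  cases b
  · exact ⟨0, l.length, by simpa using hl⟩
  · exact ⟨l.length, 0, by simpa using hl⟩

open EmbDigraph in
private lemma twoBlock_sublist {l l' : List Bool} (hs : l'.Sublist l) (h : IsTwoBlock l) :
    IsTwoBlock l' := by
  obtain ⟨a, b, rfl⟩ := h
  obtain ⟨s, t, rfl, hs1, hs2⟩ := List.sublist_append_iff.mp hs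
  obtain ⟨a', -, rfl⟩ := List.sublist_replicate_iff.mp hs1
  obtain ⟨b', -, rfl⟩ := List.sublist_replicate_iff.mp hs2
  exact ⟨a', b', rfl⟩

theorem reduction_rule_split_good_vertex' {V E : Type*}
    (G : EmbDigraph V E) (G' : EmbDigraph (V ⊕ E) E) (w : E → ℚ) (hw : ∀ e, 0 ≤ w e)
    (v : V) (hv : G.Good v)
    (hE : G'.edges = G.edges)
    (ht : ∀ e : E, G'.tail e = if G.tail e = v then Sum.inr e else Sum.inl (G.tail e))
    (hh : ∀ e : E, G'.head e = if G.head e = v then Sum.inr e else Sum.inl (G.head e))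
    (hrot : ∀ u : V, u ≠ v → ∃ n : ℕ, G'.rot (Sum.inl u) = (G.rot u).rotate n) :
    ∀ m m' : ℚ, G.IsMBW w m → G'.IsMBW w m' → m' = m := by
  classical
  -- the two optimization problems have the same feasible values
  have key : ∀ F : Finset E, F ⊆ G.edges → (G.BimodalIn F ↔ G'.BimodalIn F) := by
    intro F hF
    constructor
    · -- G bimodal ⇒ G' bimodal
      intro hB u
      match u with
      | Sum.inl u =>
        by_cases huv : u = v
        · -- no darts at `inl v` in G'
          subst huv
          have hnil : G'.rot (Sum.inl u) = [] := by
            rw [List.eq_nil_iff_forall_not_mem]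
            intro d hd
            rcases (G'.mem_rot _ d).mp hd with ⟨hde, hca⟩
            rcases hca with ⟨-, hd2⟩ | ⟨-, hd2⟩
            · rw [hh d.1] at hd2
              split at hd2 <;> simp_all
            · rw [ht d.1] at hd2
              split at hd2 <;> simp_all
          exact ⟨0, twoBlock_of_const true (by simp [hnil])⟩
        · obtain ⟨n0, hn0⟩ := hrot u huv
          obtain ⟨k, hk⟩ : ∃ k, ((G.rot u).rotate n0).rotate k = G.rot u :=
            (List.IsRotated.symm ⟨n0, rfl⟩)
          obtain ⟨n, hn⟩ := hB u
          exact ⟨k + n, by rw [hn0, ← List.rotate_rotate, hk]; exact hn⟩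
      | Sum.inr e =>
        -- at most one dart direction occurs at `inr e`
        refine ⟨0, ?_⟩
        by_cases hhe : G.head e = v
        · refine twoBlock_of_const true ?_
          intro x hx
          simp only [List.mem_map, List.mem_filter, List.mem_rotate] at hx
          obtain ⟨d, ⟨hd, hdF⟩, rfl⟩ := hx
          rcases (G'.mem_rot _ d).mp hd with ⟨hde, hca⟩
          rcases hca with ⟨h2, -⟩ | ⟨h2, hd2⟩
          · exact h2
          · exfalso
            rw [ht d.1] at hd2
            split at hd2
            · rename_i heq
              have : d.1 = e := by simpa using hd2
              rw [hE] at hde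
              exact G.tail_ne_head d.1 hde (by rw [heq, this, hhe])
            · simp at hd2
        · refine twoBlock_of_const false ?_
          intro x hx
          simp only [List.mem_map, List.mem_filter, List.mem_rotate] at hx
          obtain ⟨d, ⟨hd, hdF⟩, rfl⟩ := hx
          rcases (G'.mem_rot _ d).mp hd with ⟨hde, hca⟩
          rcases hca with ⟨h2, hd2⟩ | ⟨h2, -⟩
          · exfalso
            rw [hh d.1] at hd2
            split at hd2
            · rename_i heq
              have : d.1 = e := by simpa using hd2
              exact hhe (this ▸ heq)
            · simp at hd2
          · exact h2
    · -- G' bimodal ⇒ G bimodal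
      intro hB u
      by_cases huv : u = v
      · subst huv
        obtain ⟨n, hn⟩ := hv
        refine ⟨n, twoBlock_sublist ?_ hn⟩
        refine List.Sublist.map _ (List.monotone_filter_right _ ?_)
        intro d hd
        simp only [decide_eq_true_eq] at hd ⊢
        exact hF hd
      · obtain ⟨n0, hn0⟩ := hrot u huv
        obtain ⟨n, hn⟩ := hB (Sum.inl u)
        refine ⟨n0 + n, ?_⟩
        rw [← List.rotate_rotate, ← hn0]
        exact hn
  have hsets : {x : ℚ | ∃ F : Finset E, F ⊆ G.edges ∧ G.BimodalIn F ∧ ∑ e ∈ F, w e = x} =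
      {x : ℚ | ∃ F : Finset E, F ⊆ G'.edges ∧ G'.BimodalIn F ∧ ∑ e ∈ F, w e = x} := by
    ext x
    constructor
    · rintro ⟨F, hF, hB, rfl⟩
      exact ⟨F, hE ▸ hF, (key F hF).mp hB, rfl⟩
    · rintro ⟨F, hF, hB, rfl⟩
      have hF' : F ⊆ G.edges := hE ▸ hF
      exact ⟨F, hF', (key F hF').mpr hB, rfl⟩
  intro m m' hm hm'
  rw [EmbDigraph.IsMBW, hsets] at hm
  exact hm'.unique hm

/-- Soundness of Reduction Rule 3 (pendant splitting at a bimodal vertex `v`):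
every edge incident to `v` gets its `v`-endpoint redirected to a fresh vertex
(modelled as `Sum.inr e : V ⊕ E`), the cyclic ordering at every other vertex is
unchanged (up to rotation), weights are unchanged.  Then `MBW(G', w) = MBW(G, w)`. -/
theorem reduction_rule_split_good_vertex {V E : Type*}
    (G : EmbDigraph V E) (G' : EmbDigraph (V ⊕ E) E) (w : E → ℚ) (hw : ∀ e, 0 ≤ w e)
    (v : V) (hv : G.Good v)
    (hE : G'.edges = G.edges)
    (ht : ∀ e : E, G'.tail e = if G.tail e = v then Sum.inr e else Sum.inl (G.tail e))
    (hh : ∀ e : E, G'.head e = if G.head e = v then Sum.inr e else Sum.inl (G.head e))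
    (hrot : ∀ u : V, u ≠ v → ∃ n : ℕ, G'.rot (Sum.inl u) = (G.rot u).rotate n) :
    ∀ m m' : ℚ, G.IsMBW w m → G'.IsMBW w m' → m' = m :=
  reduction_rule_split_good_vertex' G G' w hw v hv hE ht hh hrot
end
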